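/- arXiv:1301.4029 — 5 statements merged into one kernel-verified Lean document; each statement's English description precedes it below -/
import Mathlib

section
/- For each n ∈ ℕ, let K_n be an infinite cyclic group generated by a_n, and let G = *_{n∈ℕ} K_n be the free product. For each m ∈ ℕ, let L_m be the cyclic subgroup of G generated by a_{2m}·a_{2m+1}, and let L be the subgroup of G generated by all the L_m. Then L is not finitely generated. -/
/-!
The homomorphism `FreeGroup ℕ → ℕ →₀ ℤ` killing `a_{2m}` and sending `a_{2m+1}` to the basis
vector `e_m` maps the generator `a_{2m} a_{2m+1}` of `L` to `e_m`, so it maps `L` onto the free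
abelian group of infinite rank `ℕ →₀ ℤ`. A finite generating set of `L` would therefore give one of
`ℕ →₀ ℤ`, which is impossible.
-/

open Subgroup Set

theorem Finsupp.not_addGroupFG_int (ι : Type*) [Infinite ι] : ¬ AddGroup.FG (ι →₀ ℤ) := by
  rw [← Module.Finite.iff_addGroup_fg, Module.finite_finsupp_self_iff]
  simp [not_finite_iff_infinite.mpr, not_subsingleton]

theorem Finsupp.closure_range_ofAdd_single_one (ι : Type*) :
    closure (range fun i : ι ↦ Multiplicative.ofAdd (Finsupp.single i (1 : ℤ))) = ⊤ := by
  have hadd : AddSubgroup.closure (range fun i : ι ↦ Finsupp.single i (1 : ℤ)) = ⊤ := by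
    rw [← Submodule.span_int_eq_addSubgroupClosure, ← Finsupp.coe_basisSingleOne,
      Finsupp.basisSingleOne.span_eq, Submodule.top_toAddSubgroup]
  convert congrArg AddSubgroup.toSubgroup hadd using 1
  rw [AddSubgroup.toSubgroup_closure]
  congr 1
  ext
  simp

theorem Subgroup.not_fg_closure_range_of_map_eq_single {G ι : Type*} [Group G] [Infinite ι]
    (g : ι → G) (φ : G →* Multiplicative (ι →₀ ℤ))
    (hφ : ∀ i, φ (g i) = Multiplicative.ofAdd (Finsupp.single i 1)) :
    ¬ (closure (range g)).FG := by
  rintro ⟨S, hS⟩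
  have hS_image : closure (φ '' S) = ⊤ := by
    rw [← MonoidHom.map_closure, hS, MonoidHom.map_closure, ← range_comp, Function.comp_def]
    simp only [hφ]
    exact Finsupp.closure_range_ofAdd_single_one ι
  exact Finsupp.not_addGroupFG_int ι <|
    AddGroup.fg_iff_mul_fg.mpr (Group.fg_iff.mpr ⟨_, hS_image, S.finite_toSet.image φ⟩)

noncomputable def FreeGroup.oddGenHom : FreeGroup ℕ →* Multiplicative (ℕ →₀ ℤ) :=
  FreeGroup.lift fun n ↦ Multiplicative.ofAdd (Finsupp.single (n / 2) (n % 2 : ℤ))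

theorem FreeGroup.oddGenHom_of_mul_of (m : ℕ) :
    oddGenHom (of (2 * m) * of (2 * m + 1)) = Multiplicative.ofAdd (Finsupp.single m 1) := by
  have hdiv : (2 * m + 1) / 2 = m := by omega
  simp [oddGenHom, hdiv]

/-- Let `G = *_{n∈ℕ} ⟨a_n⟩` be the free product of countably many infinite cyclic
groups (i.e. the free group on `ℕ`), and let `L` be the subgroup generated by the
elements `a_{2m}·a_{2m+1}`, `m ∈ ℕ`. Then `L` is not finitely generated. -/
theorem stmt7 :
    ¬ (Subgroup.closure
        {x : FreeGroup ℕ | ∃ m : ℕ, x = FreeGroup.of (2 * m) * FreeGroup.of (2 * m + 1)}).FG := by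
  have hset : {x : FreeGroup ℕ | ∃ m : ℕ, x = FreeGroup.of (2 * m) * FreeGroup.of (2 * m + 1)} =
      range fun m ↦ FreeGroup.of (2 * m) * FreeGroup.of (2 * m + 1) := by
    ext
    simp [eq_comm]
  rw [hset]
  exact not_fg_closure_range_of_map_eq_single _ _ FreeGroup.oddGenHom_of_mul_of
end

section
/- For each n ∈ ℕ, let K_n = ⟨a_n⟩ be infinite cyclic and G = *_{n∈ℕ} K_n. Let L ≤ G be the subgroup generated by the elements a_{2m}a_{2m+1} for m ∈ ℕ. Then for every n ∈ ℕ and every g ∈ G, the intersection L ∩ gK_ng^{-1} is trivial. -/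
/-- Let `G = *_{n∈ℕ} ⟨a_n⟩` be the free product of countably many infinite cyclic
groups (i.e. the free group on `ℕ`), `K_n = ⟨a_n⟩`, and let `L` be the subgroup
generated by the elements `a_{2m}·a_{2m+1}`, `m ∈ ℕ`. Then for every `n` and every
`g ∈ G`, the intersection `L ∩ gK_ng⁻¹` is trivial. -/
theorem stmt8 :
    ∀ (n : ℕ) (g : FreeGroup ℕ) (x : FreeGroup ℕ),
      x ∈ Subgroup.closure
        {y : FreeGroup ℕ | ∃ m : ℕ, y = FreeGroup.of (2 * m) * FreeGroup.of (2 * m + 1)} →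
      g⁻¹ * x * g ∈ Subgroup.zpowers (FreeGroup.of n) → x = 1 := by
  intro n g x hxL hconj
  set p : ℕ := if n % 2 = 0 then n + 1 else n - 1 with hp
  set f : ℕ → ℤ := fun j => (if j = n then 1 else 0) - (if j = p then 1 else 0) with hf
  set φ : FreeGroup ℕ →* Multiplicative ℤ :=
    FreeGroup.lift (fun j => Multiplicative.ofAdd (f j)) with hφ
  have hφx : φ x = 1 := by
    have : x ∈ φ.ker := by
      refine (Subgroup.closure_le φ.ker).2 ?_ hxL
      rintro y ⟨m, rfl⟩
      have h0 : f (2 * m) + f (2 * m + 1) = 0 := by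
        simp only [hf, hp]
        split_ifs <;> omega
      have : φ (FreeGroup.of (2 * m) * FreeGroup.of (2 * m + 1)) =
          Multiplicative.ofAdd (f (2 * m) + f (2 * m + 1)) := by
        simp [hφ, ← ofAdd_add]
      simp only [SetLike.mem_coe, MonoidHom.mem_ker, this, h0, ofAdd_zero]
    simpa [MonoidHom.mem_ker] using this
  obtain ⟨k, hk⟩ := hconj
  have hfn : f n = 1 := by
    simp only [hf, hp]
    split_ifs <;> omega
  have h1 : φ (g⁻¹ * x * g) = Multiplicative.ofAdd k := by
    rw [← hk]
    simp [hφ, ← ofAdd_zsmul, hfn]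
  have h2 : φ (g⁻¹ * x * g) = 1 := by
    simp [map_mul, hφx]
  have hk0 : k = 0 := by
    have := h1.symm.trans h2
    simpa using this
  have hx1 : g⁻¹ * x * g = 1 := by
    rw [← hk, hk0]; simp
  have : x = g * (g⁻¹ * x * g) * g⁻¹ := by group
  rw [hx1] at this
  simpa using this
end

section
/- Let G be a group, {H_λ}_{λ∈Λ} a family of subgroups of G, and for some λ₀ ∈ Λ let Q be a subgroup of H_{λ₀}. For each λ ∈ Λ let {K_{λ,μ}}_{μ∈M_λ} be a family of subgroups of H_λ. If Q satisfies Condition (b) with respect to the family {K_{λ,μ}}_{λ∈Λ, μ∈M_λ} in G, then Q satisfies Condition (b) with respect to {K_{λ₀,μ}}_{μ∈M_{λ₀}} in H_{λ₀}. -/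
/-- A subgroup `L` of `G` satisfies Condition (b) with respect to a family
`{P_i}_{i∈I}` of subgroups of `G` if whenever the cosets `Ly₁` and `Ly₂` are
disjoint, only finitely many members of the family satisfy `y₁P_i ∩ Ly₂ ≠ ∅`. -/
def CondB {G : Type*} [Group G] {I : Type*} (L : Subgroup G) (P : I → Subgroup G) : Prop :=
  ∀ y₁ y₂ : G, (∀ l₁ ∈ L, ∀ l₂ ∈ L, l₁ * y₁ ≠ l₂ * y₂) →
    {i : I | ∃ x ∈ P i, ∃ l ∈ L, y₁ * x = l * y₂}.Finite

/-- If `Q ≤ H_{λ₀}` satisfies Condition (b) with respect to the whole family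
`{K_{λ,μ}}` in `G`, then `Q` satisfies Condition (b) with respect to
`{K_{λ₀,μ}}_{μ}` in `H_{λ₀}`. -/
theorem stmt10 {G : Type*} [Group G] {Λ : Type*} {M : Λ → Type*}
    (H : Λ → Subgroup G) (K : ∀ l, M l → Subgroup G)
    (hK : ∀ l μ, K l μ ≤ H l) (l₀ : Λ) (Q : Subgroup G) (hQ : Q ≤ H l₀)
    (hb : CondB Q (fun p : Σ l, M l => K p.1 p.2)) :
    ∀ y₃ y₄ : G, y₃ ∈ H l₀ → y₄ ∈ H l₀ →
      (∀ q₁ ∈ Q, ∀ q₂ ∈ Q, q₁ * y₃ ≠ q₂ * y₄) →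
      {μ : M l₀ | ∃ x ∈ K l₀ μ, ∃ q ∈ Q, y₃ * x = q * y₄}.Finite := by
  intro y₃ y₄ _ _ hdisj
  have hfin := hb y₃ y₄ hdisj
  have : {μ : M l₀ | ∃ x ∈ K l₀ μ, ∃ q ∈ Q, y₃ * x = q * y₄}
      = (fun μ => (⟨l₀, μ⟩ : Σ l, M l)) ⁻¹'
        {p : Σ l, M l | ∃ x ∈ K p.1 p.2, ∃ l ∈ Q, y₃ * x = l * y₄} := rfl
  rw [this]
  exact hfin.preimage (sigma_mk_injective.injOn)
end

section
/- Let L be a subgroup of a group G and {H_λ}_{λ∈Λ} a family of subgroups of G. If L satisfies Condition (b) with respect to {H_λ}, then for every g ∈ G, the conjugate gLg^{-1} satisfies Condition (b) with respect to {H_λ}. -/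
/-- If `L` satisfies Condition (b) with respect to `{H_λ}`, then so does every
conjugate `gLg⁻¹`. -/
theorem stmt11 {G : Type*} [Group G] {Λ : Type*} (L : Subgroup G) (H : Λ → Subgroup G)
    (hb : CondB L H) :
    ∀ g : G, CondB (L.map (MulAut.conj g).toMonoidHom) H := by
  intro g y₁ y₂ hdisj
  have h := hb (g⁻¹ * y₁) (g⁻¹ * y₂) (by
    intro l₁ hl₁ l₂ hl₂ heq
    refine hdisj (g * l₁ * g⁻¹) ⟨l₁, hl₁, rfl⟩ (g * l₂ * g⁻¹) ⟨l₂, hl₂, rfl⟩ ?_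
    have : g * (l₁ * (g⁻¹ * y₁)) = g * (l₂ * (g⁻¹ * y₂)) := by rw [heq]
    group at this ⊢
    simpa using this)
  refine h.subset ?_
  rintro i ⟨x, hx, l, ⟨l₀, hl₀, rfl⟩, heq⟩
  refine ⟨x, hx, l₀, hl₀, ?_⟩
  have : g⁻¹ * (y₁ * x) = g⁻¹ * (g * l₀ * g⁻¹ * y₂) := by
    rw [heq]; rfl
  group at this ⊢
  simpa [mul_assoc] using this
end

section
/- Let G = *_{λ∈Λ} H_λ be a free product of a family of groups, and suppose a subgroup L ≤ G has the property that every element of L, written in normal form with respect to the free product decomposition, has all of its syllables lying in L. Then L = *_{λ∈Λ}(L ∩ H_λ), i.e., L is the free product of its intersections with the factors. -/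
open Monoid

/-- Let `G = *_{λ} H_λ` be a free product and `L ≤ G` a subgroup such that every
element of `L`, written in normal form, has all of its syllables in `L`. Then the
canonical homomorphism `*_λ (L ∩ H_λ) → G` is injective with image `L`, i.e.
`L = *_λ (L ∩ H_λ)`. -/
theorem stmt13 {Λ : Type*} {H : Λ → Type*} [∀ l, Group (H l)]
    (L : Subgroup (CoprodI H))
    (hsyll : ∀ w : CoprodI.Word H, w.prod ∈ L →
      ∀ p ∈ w.toList, CoprodI.of p.2 ∈ L) :
    Function.Injective
      (CoprodI.lift (fun l =>
        (CoprodI.of : H l →* CoprodI H).comp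
          (Subgroup.comap (CoprodI.of : H l →* CoprodI H) L).subtype)) ∧
    (CoprodI.lift (fun l =>
        (CoprodI.of : H l →* CoprodI H).comp
          (Subgroup.comap (CoprodI.of : H l →* CoprodI H) L).subtype)).range = L := by
  classical
  set K : ∀ l, Subgroup (H l) :=
    fun l => Subgroup.comap (CoprodI.of : H l →* CoprodI H) L with hK
  set φ : CoprodI (fun l => K l) →* CoprodI H :=
    CoprodI.lift (fun l =>
      (CoprodI.of : H l →* CoprodI H).comp (K l).subtype) with hφ
  have hφof : ∀ (l : Λ) (m : K l), φ (CoprodI.of m) = CoprodI.of (m : H l) := by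
    intro l m
    simp [hφ]
  constructor
  · rw [injective_iff_map_eq_one]
    intro x hx
    -- represent x as a reduced word in the coproduct of the K l
    set w : CoprodI.Word (fun l => K l) := CoprodI.Word.equiv x with hw
    have hxw : w.prod = x := CoprodI.Word.equiv.symm_apply_apply x
    -- map the word letterwise into `CoprodI H`
    let w' : CoprodI.Word H :=
      { toList := w.toList.map fun p => ⟨p.1, (p.2 : H p.1)⟩
        ne_one := by
          intro l hl
          simp only [List.mem_map] at hl
          obtain ⟨p, hp, rfl⟩ := hl
          have h1 := w.ne_one p hp
          intro hc
          exact h1 (Subtype.ext hc)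
        chain_ne := by
          have := w.chain_ne
          rw [List.isChain_map]
          exact this }
    have hprod : w'.prod = φ x := by
      rw [← hxw]
      show (List.prod (w'.toList.map fun p => CoprodI.of p.2)) = _
      show _ = φ (List.prod (w.toList.map fun p => CoprodI.of p.2))
      rw [map_list_prod]
      simp only [w', List.map_map]
      congr 1
    have hempty : w' = CoprodI.Word.empty := by
      apply (CoprodI.Word.equiv (M := H)).symm.injective
      show w'.prod = CoprodI.Word.prod CoprodI.Word.empty
      rw [hprod, hx, CoprodI.Word.prod_empty]
    have : w.toList = [] := by
      have h2 : w.toList.map (fun p => (⟨p.1, (p.2 : H p.1)⟩ : Σ l, H l)) = [] :=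
        congrArg CoprodI.Word.toList hempty
      exact List.map_eq_nil_iff.mp h2
    have hwempty : w = CoprodI.Word.empty := CoprodI.Word.ext this
    rw [← hxw, hwempty, CoprodI.Word.prod_empty]
  · apply le_antisymm
    · rintro _ ⟨x, rfl⟩
      induction x using CoprodI.induction_left with
      | one => simpa using L.one_mem
      | mul m x ih =>
        rw [map_mul]
        exact L.mul_mem (by rw [hφof]; exact m.2) ih
    · intro g hg
      set w : CoprodI.Word H := CoprodI.Word.equiv g with hw
      have hgw : w.prod = g := CoprodI.Word.equiv.symm_apply_apply g
      have hsy := hsyll w (by rw [hgw]; exact hg)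
      rw [← hgw]
      show List.prod (w.toList.map fun p => CoprodI.of p.2) ∈ _
      apply list_prod_mem
      intro x hx
      simp only [List.mem_map] at hx
      obtain ⟨p, hp, rfl⟩ := hx
      exact ⟨CoprodI.of (⟨p.2, hsy p hp⟩ : K p.1), hφof _ _⟩
end
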